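/- arXiv:1705.09773 — 2 statements merged into one kernel-verified Lean document; each statement's English description precedes it below -/
import Mathlib

section
/- Let G be a connected graph with minimum degree at least 3. If Z(G) = 3, then the edge connectivity of G is at least 3. -/
open Matrix Finset

variable {V : Type*}

/-- `A` is a real symmetric matrix whose off-diagonal nonzero pattern is given by `G`. -/
def IsGraphMatrix [Fintype V] (G : SimpleGraph V) (A : Matrix V V ℝ) : Prop :=
  A.IsSymm ∧ ∀ i j : V, i ≠ j → (A i j ≠ 0 ↔ G.Adj i j)

/-- The nullity of a square real matrix. -/
noncomputable def nullity [Fintype V] (A : Matrix V V ℝ) : ℕ :=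
  Fintype.card V - A.rank

/-- The minimum rank of a graph. -/
noncomputable def minRank [Fintype V] (G : SimpleGraph V) : ℕ :=
  sInf {r : ℕ | ∃ A : Matrix V V ℝ, IsGraphMatrix G A ∧ A.rank = r}

/-- The maximum nullity of a graph. -/
noncomputable def maxNullity [Fintype V] (G : SimpleGraph V) : ℕ :=
  sSup {k : ℕ | ∃ A : Matrix V V ℝ, IsGraphMatrix G A ∧ nullity A = k}

/-- The set of vertices eventually colored black by the color-change rule,
starting from the initially black set `Z`. A black vertex `u` with exactly one
white neighbor `v` forces `v` black. -/
inductive ZForced (G : SimpleGraph V) (Z : Set V) : V → Prop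
  | init : ∀ {v}, v ∈ Z → ZForced G Z v
  | force : ∀ {u v}, G.Adj u v → ZForced G Z u →
      (∀ w, G.Adj u w → w ≠ v → ZForced G Z w) → ZForced G Z v

/-- `Z` is a zero forcing set for `G`. -/
def IsZeroForcingSet (G : SimpleGraph V) (Z : Set V) : Prop :=
  ∀ v : V, ZForced G Z v

/-- The zero forcing number of `G`. -/
noncomputable def zeroForcingNumber [Fintype V] (G : SimpleGraph V) : ℕ :=
  sInf {k : ℕ | ∃ Z : Finset V, Z.card = k ∧ IsZeroForcingSet G ↑Z}

/-- The edge connectivity of `G`: the least number of edges whose deletion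
disconnects `G`. -/
noncomputable def edgeConnectivity [Fintype V] (G : SimpleGraph V) : ℕ :=
  sInf {k : ℕ | ∃ F : Finset (Sym2 V), F.card = k ∧ ↑F ⊆ G.edgeSet ∧
    ¬(G.deleteEdges ↑F).Connected}

/-!
Let `B` be a zero forcing set with three vertices, and suppose a set `F` of at most two edges
contains every edge between `X` and `Y = Xᶜ`. Minimum degree three gives `|X|, |Y| > 3`.
During forcing, the number of black vertices with a white neighbour never increases (the forcing
vertex leaves that set, at most the forced one enters), so while white vertices remain, one of
them has degree at most that number. Colouring `Y` black on top of `B`, the only black vertices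
with a white neighbour lie in `(B ∩ X) ∪ ∂X`, where `∂X`, the endpoints in `X` of edges of `F`,
has at most two vertices; hence `|(B ∩ X) ∪ ∂X| ≥ 3`. The first force is made by a seed adjacent
to the two other seeds, so every seed has a neighbour in `B`; a lone seed in `X` therefore lies
in `∂X`, which is too small. So each of `X` and `Y` contains two of the three seeds.
-/

section

variable {G : SimpleGraph V}

namespace ZForced

theorem mono {S T : Set V} (hST : S ⊆ T) {v : V} (hv : ZForced G S v) : ZForced G T v := by
  induction hv with
  | init hv => exact .init (hST hv)
  | force huv _ _ hu hw => exact .force huv hu hw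

theorem exists_first_force {S : Set V} {v : V} (hv : ZForced G S v) (hvS : v ∉ S) :
    ∃ u ∈ S, ∃ w ∉ S, G.Adj u w ∧ ∀ x, G.Adj u x → x ≠ w → x ∈ S := by
  by_contra! hno
  suffices ∀ x, ZForced G S x → x ∈ S from hvS (this v hv)
  intro x hx
  induction hx with
  | init hx => exact hx
  | @force u x hux _ _ hu hw =>
    by_contra hxS
    obtain ⟨y, hy, hyx, hyS⟩ := hno u hu x hxS hux
    exact hyS (hw y hy hyx)

end ZForced

theorem IsZeroForcingSet.mono {S T : Set V} (hS : IsZeroForcingSet G S)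
    (hST : S ⊆ T) : IsZeroForcingSet G T :=
  fun v => (hS v).mono hST

namespace SimpleGraph

def Separates (G : SimpleGraph V) (F : Finset (Sym2 V)) (X : Finset V) : Prop :=
  ∀ v ∈ X, ∀ w ∉ X, G.Adj v w → s(v, w) ∈ F

theorem not_connected_deleteIncidenceSet {v w : V} (hvw : G.Adj v w) :
    ¬(G.deleteIncidenceSet v).Connected := by
  intro h
  obtain ⟨p⟩ := h.preconnected v w
  cases p with
  | nil => exact G.irrefl hvw
  | cons hvx _ => exact (deleteIncidenceSet_adj.1 hvx).2.1 rfl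

end SimpleGraph

variable [Fintype V] [DecidableEq V]

theorem SimpleGraph.Separates.compl {F : Finset (Sym2 V)} {X : Finset V}
    (h : G.Separates F X) : G.Separates F Xᶜ := by
  intro v hv w hw hvw
  rw [mem_compl, not_not] at hw
  rw [Sym2.eq_swap]
  exact h w hw v (mem_compl.1 hv) hvw.symm

theorem SimpleGraph.exists_separates_of_not_connected [Nonempty V] {F : Finset (Sym2 V)}
    (h : ¬(G.deleteEdges ↑F).Connected) :
    ∃ X : Finset V, X.Nonempty ∧ Xᶜ.Nonempty ∧ G.Separates F X := by
  classical
  obtain ⟨p, q, hpq⟩ : ∃ p q, ¬(G.deleteEdges ↑F).Reachable p q := by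
    by_contra! h'
    exact h ((connected_iff _).2 ⟨h', inferInstance⟩)
  refine ⟨univ.filter ((G.deleteEdges ↑F).Reachable p), ⟨p, by simp⟩, ⟨q, by simpa using hpq⟩,
    ?_⟩
  intro v hv w hw hvw
  by_contra hF
  simp only [mem_filter, mem_univ, true_and] at hv hw
  exact hw (hv.trans (G.deleteEdges_adj.2 ⟨hvw, hF⟩).reachable)

variable [DecidableRel G.Adj]

variable (G) in
def SimpleGraph.innerBoundary (S : Finset V) : Finset V :=
  {u ∈ S | ∃ w ∉ S, G.Adj u w}

theorem SimpleGraph.mem_innerBoundary {S : Finset V} {u : V} :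
    u ∈ G.innerBoundary S ↔ u ∈ S ∧ ∃ w ∉ S, G.Adj u w :=
  mem_filter

theorem SimpleGraph.card_innerBoundary_insert_le {S : Finset V} {u w : V} (hu : u ∈ S)
    (hw : w ∉ S) (huw : G.Adj u w) (hforce : ∀ x, G.Adj u x → x ≠ w → x ∈ S) :
    #(G.innerBoundary (insert w S)) ≤ #(G.innerBoundary S) := by
  have hsub : G.innerBoundary (insert w S) ⊆ insert w ((G.innerBoundary S).erase u) := by
    intro x hx
    obtain ⟨hxS, y, hy, hxy⟩ := G.mem_innerBoundary.1 hx
    rw [mem_insert, not_or] at hy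
    rcases mem_insert.1 hxS with rfl | hxS
    · exact mem_insert_self _ _
    refine mem_insert_of_mem (mem_erase.2 ⟨?_, G.mem_innerBoundary.2 ⟨hxS, y, hy.2, hxy⟩⟩)
    rintro rfl
    exact hy.2 (hforce y hxy hy.1)
  have hu' : u ∈ G.innerBoundary S := G.mem_innerBoundary.2 ⟨hu, w, hw, huw⟩
  calc #(G.innerBoundary (insert w S))
      ≤ #((G.innerBoundary S).erase u) + 1 := (card_le_card hsub).trans (card_insert_le _ _)
    _ = #(G.innerBoundary S) := card_erase_add_one hu'

theorem IsZeroForcingSet.exists_degree_le_card_innerBoundary {S : Finset V}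
    (hS : IsZeroForcingSet G ↑S) {v : V} (hv : v ∉ S) :
    ∃ x ∉ S, G.degree x ≤ #(G.innerBoundary S) := by
  obtain ⟨u, hu, w, hw, huw, hforce⟩ := (hS v).exists_first_force hv
  have hbound := G.card_innerBoundary_insert_le hu hw huw hforce
  by_cases hfull : ∀ x, x ∈ insert w S
  · -- every neighbour of `w` is black and adjacent to the white vertex `w`
    refine ⟨w, hw, card_le_card fun x hx => G.mem_innerBoundary.2 ⟨?_, w, hw, ?_⟩⟩
    · exact (mem_insert.1 (hfull x)).resolve_left ((G.mem_neighborFinset _ _).1 hx).ne'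
    · exact ((G.mem_neighborFinset _ _).1 hx).symm
  obtain ⟨y, hy⟩ := not_forall.1 hfull
  have : #(Sᶜ.erase w) < #Sᶜ := card_erase_lt_of_mem (mem_compl.2 hw)
  obtain ⟨x, hx, hdeg⟩ :=
    exists_degree_le_card_innerBoundary (hS.mono (coe_subset.2 (subset_insert w S))) hy
  exact ⟨x, fun h => hx (mem_insert_of_mem h), hdeg.trans hbound⟩
termination_by #Sᶜ

theorem IsZeroForcingSet.subset_union_innerBoundary {B : Finset V} (hB : IsZeroForcingSet G ↑B)
    {δ : ℕ} (hδ : ∀ v, δ ≤ G.degree v) {X : Finset V}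
    (hX : #(B ∩ X ∪ G.innerBoundary X) < δ) : X ⊆ B ∪ G.innerBoundary X := by
  set S := B ∪ G.innerBoundary X ∪ Xᶜ
  have hS : IsZeroForcingSet G ↑S :=
    hB.mono (coe_subset.2 (subset_union_left.trans subset_union_left))
  intro v hvX
  by_contra hv
  rw [mem_union, not_or] at hv
  obtain ⟨x, -, hx⟩ := hS.exists_degree_le_card_innerBoundary (v := v) (by simp [S, hv, hvX])
  have hsub : G.innerBoundary S ⊆ B ∩ X ∪ G.innerBoundary X := by
    intro u hu
    obtain ⟨huS, w, hwS, huw⟩ := G.mem_innerBoundary.1 hu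
    simp only [S, mem_union, mem_compl, not_or, not_not] at huS hwS
    have huX : u ∈ X := by
      by_contra huX
      exact hwS.1.2 (G.mem_innerBoundary.2 ⟨hwS.2, u, huX, huw.symm⟩)
    rcases huS with (huB | huBd) | huX'
    · exact mem_union_left _ (mem_inter.2 ⟨huB, huX⟩)
    · exact mem_union_right _ huBd
    · exact absurd huX huX'
  have := card_le_card hsub
  have := hδ x
  omega

theorem IsZeroForcingSet.exists_adj_mem {B : Finset V} (hB : IsZeroForcingSet G ↑B)
    (hδ : ∀ v, #B ≤ G.degree v) (hB2 : 2 ≤ #B) {b : V} (hb : b ∈ B) :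
    ∃ c ∈ B, G.Adj b c := by
  obtain ⟨v, hv⟩ : ∃ v, v ∉ B := by
    by_contra! hall
    have hdeg := hδ b
    rw [eq_univ_iff_forall.2 hall, card_univ] at hdeg
    exact (G.degree_lt_card_verts b).not_ge hdeg
  obtain ⟨u, hu, w, hw, huw, hforce⟩ := (hB v).exists_first_force hv
  have hN : G.neighborFinset u ⊆ insert w (B.erase u) := by
    intro x hx
    rw [G.mem_neighborFinset] at hx
    by_cases hxw : x = w
    · exact hxw ▸ mem_insert_self _ _
    · exact mem_insert_of_mem (mem_erase.2 ⟨hx.ne', hforce x hx hxw⟩)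
  have hN_eq : G.neighborFinset u = insert w (B.erase u) := by
    refine eq_of_subset_of_card_le hN ?_
    calc #(insert w (B.erase u)) ≤ #(B.erase u) + 1 := card_insert_le _ _
      _ = #B := card_erase_add_one hu
      _ ≤ #(G.neighborFinset u) := (G.card_neighborFinset_eq_degree u).symm ▸ hδ u
  have hu_adj : ∀ c ∈ B, c ≠ u → G.Adj u c := fun c hc hcu =>
    (G.mem_neighborFinset _ _).1 (hN_eq ▸ mem_insert_of_mem (mem_erase.2 ⟨hcu, hc⟩))
  by_cases hbu : b = u
  · obtain ⟨c, hc⟩ : (B.erase u).Nonempty := by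
      rw [← card_pos, card_erase_of_mem hu]; omega
    exact ⟨c, (mem_erase.1 hc).2, hbu ▸ hu_adj c (mem_erase.1 hc).2 (mem_erase.1 hc).1⟩
  · exact ⟨u, hu, (hu_adj b hb hbu).symm⟩

namespace SimpleGraph.Separates

variable {F : Finset (Sym2 V)} {X : Finset V}

theorem sum_card_neighborFinset_sdiff_le (h : G.Separates F X) :
    ∑ v ∈ X, #(G.neighborFinset v \ X) ≤ #F := by
  rw [← card_sigma]
  refine card_le_card_of_injOn (fun p => s(p.1, p.2)) ?_ ?_
  · rintro ⟨v, w⟩ hp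
    simp only [mem_coe, mem_sigma, mem_sdiff, mem_neighborFinset] at hp
    exact h v hp.1 w hp.2.2 hp.2.1
  · rintro ⟨v, w⟩ hp ⟨v', w'⟩ hp' he
    simp only [mem_coe, mem_sigma, mem_sdiff] at hp hp'
    rcases Sym2.eq_iff.1 he with ⟨rfl, rfl⟩ | ⟨rfl, rfl⟩
    · rfl
    · exact absurd hp.1 hp'.2.2

theorem card_innerBoundary_le (h : G.Separates F X) : #(G.innerBoundary X) ≤ #F :=
  calc #(G.innerBoundary X) = ∑ _v ∈ G.innerBoundary X, 1 := card_eq_sum_ones _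
    _ ≤ ∑ v ∈ G.innerBoundary X, #(G.neighborFinset v \ X) := by
      refine sum_le_sum fun v hv => card_pos.2 ?_
      obtain ⟨-, w, hw, hvw⟩ := G.mem_innerBoundary.1 hv
      exact ⟨w, mem_sdiff.2 ⟨(G.mem_neighborFinset _ _).2 hvw, hw⟩⟩
    _ ≤ ∑ v ∈ X, #(G.neighborFinset v \ X) := sum_le_sum_of_subset (filter_subset _ _)
    _ ≤ #F := h.sum_card_neighborFinset_sdiff_le

/-- A nonempty side with at most `δ` vertices sends at least `#X * (δ + 1 - #X) ≥ δ` edges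
across the cut. -/
theorem lt_card {δ : ℕ} (h : G.Separates F X) (hδ : ∀ v, δ ≤ G.degree v) (hX : X.Nonempty)
    (hF : #F < δ) : δ < #X := by
  by_contra! hXδ
  have hout : ∀ v ∈ X, δ + 1 - #X ≤ #(G.neighborFinset v \ X) := by
    intro v hv
    have hsub : G.neighborFinset v ⊆ X.erase v ∪ (G.neighborFinset v \ X) := by
      intro w hw
      by_cases hwX : w ∈ X
      · exact mem_union_left _ (mem_erase.2 ⟨((G.mem_neighborFinset _ _).1 hw).ne', hwX⟩)
      · exact mem_union_right _ (mem_sdiff.2 ⟨hw, hwX⟩)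
    have := (card_le_card hsub).trans (card_union_le _ _)
    rw [card_erase_of_mem hv, card_neighborFinset_eq_degree] at this
    have := hδ v
    have := card_pos.2 ⟨v, hv⟩
    omega
  have hsum := (card_nsmul_le_sum X _ _ hout).trans h.sum_card_neighborFinset_sdiff_le
  rw [smul_eq_mul] at hsum
  have hpos := hX.card_pos
  obtain ⟨d, rfl⟩ := Nat.exists_eq_add_of_le hXδ
  rw [show #X + d + 1 - #X = d + 1 by omega] at hsum
  nlinarith

end SimpleGraph.Separates

theorem IsZeroForcingSet.two_le_card_inter_of_separates {B : Finset V}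
    (hB : IsZeroForcingSet G ↑B) (hB3 : #B = 3) (hδ : ∀ v, 3 ≤ G.degree v)
    {F : Finset (Sym2 V)} (hF : #F ≤ 2) {Y : Finset V} (hY : Y.Nonempty)
    (hsep : G.Separates F Y) : 2 ≤ #(B ∩ Y) := by
  have hY3 : 3 < #Y := hsep.lt_card hδ hY (by omega)
  have hbd : #(G.innerBoundary Y) ≤ 2 := hsep.card_innerBoundary_le.trans hF
  have hcover : 3 ≤ #(B ∩ Y ∪ G.innerBoundary Y) := by
    by_contra! hlt
    have hsub : Y ⊆ B ∩ Y ∪ G.innerBoundary Y := fun v hv => by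
      have := hB.subset_union_innerBoundary hδ hlt hv
      simp only [mem_union, mem_inter] at this ⊢
      tauto
    have := card_le_card hsub
    omega
  by_contra! hlt
  have hsub : B ∩ Y ⊆ G.innerBoundary Y := by
    intro b hb
    obtain ⟨hbB, hbY⟩ := mem_inter.1 hb
    obtain ⟨c, hcB, hbc⟩ := hB.exists_adj_mem (fun v => hB3 ▸ hδ v) (by omega) hbB
    have hcY : c ∉ Y := fun hcY =>
      G.irrefl (card_le_one.1 (by omega) c (mem_inter.2 ⟨hcB, hcY⟩) b hb ▸ hbc)
    exact G.mem_innerBoundary.2 ⟨hbY, c, hcY, hbc⟩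
  rw [union_eq_right.2 hsub] at hcover
  omega

end

theorem three_le_edgeConnectivity_of_zeroForcingNumber_eq_three_general
    {V : Type*} [Fintype V] [DecidableEq V]
    (G : SimpleGraph V) [DecidableRel G.Adj]
    (hdeg : ∀ v : V, 3 ≤ G.degree v)
    (hZ : zeroForcingNumber G = 3) :
    3 ≤ edgeConnectivity G := by
  obtain ⟨B, hB3, hB⟩ : 3 ∈ {k : ℕ | ∃ Z : Finset V, #Z = k ∧ IsZeroForcingSet G ↑Z} :=
    hZ ▸ Nat.sInf_mem ⟨_, univ, rfl, fun v => .init (mem_univ v)⟩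
  obtain ⟨b, -⟩ := card_pos.1 (by omega : 0 < #B)
  have : Nonempty V := ⟨b⟩
  obtain ⟨w, hbw⟩ := G.degree_pos_iff_exists_adj b |>.1 (by have := hdeg b; omega)
  refine le_csInf ⟨_, G.incidenceFinset b, rfl, ?_, ?_⟩ ?_
  · simpa using G.incidenceSet_subset b
  · rw [SimpleGraph.coe_incidenceFinset]
    exact G.not_connected_deleteIncidenceSet hbw
  rintro _ ⟨F, rfl, -, hF⟩
  by_contra! hF2
  obtain ⟨X, hX, hXc, hsep⟩ := G.exists_separates_of_not_connected hF
  have hin := hB.two_le_card_inter_of_separates hB3 hdeg (by omega) hX hsep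
  have hout := hB.two_le_card_inter_of_separates hB3 hdeg (by omega) hXc hsep.compl
  have hsplit := card_inter_add_card_sdiff B X
  rw [sdiff_eq_inter_compl] at hsplit
  omega

/-- If `G` is connected with minimum degree at least `3` and `Z(G) = 3`, then
the edge connectivity of `G` is at least `3`. -/
theorem three_le_edgeConnectivity_of_zeroForcingNumber_eq_three
    {V : Type*} [Fintype V] [DecidableEq V]
    (G : SimpleGraph V) [DecidableRel G.Adj]
    (hconn : G.Connected) (hdeg : ∀ v : V, 3 ≤ G.degree v)
    (hZ : zeroForcingNumber G = 3) :
    3 ≤ edgeConnectivity G :=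
  three_le_edgeConnectivity_of_zeroForcingNumber_eq_three_general G hdeg hZ
end

section
/- For every cubic graph G on n vertices, M(G) ≤ Z(G) ≤ n/2 + 1. -/
open Matrix Finset

variable {V : Type*}

lemma zforced_zero [Fintype V] [DecidableEq V] (G : SimpleGraph V) (Z : Set V)
    (A : Matrix V V ℝ) (hA : IsGraphMatrix G A) (x : V → ℝ)
    (hx : A.mulVec x = 0) (hZ : ∀ v ∈ Z, x v = 0) :
    ∀ v, ZForced G Z v → x v = 0 := by
  intro v h
  induction h with
  | init hv => exact hZ _ hv
  | @force u v hadj hu hall ihu ihall =>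
    have hrow : ∑ j, A u j * x j = 0 := by
      have := congrFun hx u
      simpa [Matrix.mulVec, dotProduct] using this
    have hsingle : ∑ j, A u j * x j = A u v * x v := by
      refine Finset.sum_eq_single v ?_ (by simp)
      intro j _ hjv
      by_cases hj0 : A u j = 0
      · simp [hj0]
      · by_cases hju : j = u
        · subst hju; rw [ihu]; ring
        · have hadjuj : G.Adj u j := (hA.2 u j (Ne.symm hju)).mp hj0
          rw [ihall j hadjuj hjv]; ring
    have hAuv : A u v ≠ 0 := (hA.2 u v hadj.ne).mpr hadj
    have := hsingle ▸ hrow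
    exact (mul_eq_zero.mp this).resolve_left hAuv

lemma nullity_le_card [Fintype V] [DecidableEq V] (G : SimpleGraph V)
    (A : Matrix V V ℝ) (hA : IsGraphMatrix G A) (Z : Finset V)
    (hZ : IsZeroForcingSet G ↑Z) : nullity A ≤ Z.card := by
  classical
  set K := LinearMap.ker A.mulVecLin with hK
  have hinj : Function.Injective
      ((LinearMap.funLeft ℝ ℝ (Subtype.val : {v // v ∈ Z} → V)).comp K.subtype) := by
    intro ⟨x, hxK⟩ ⟨y, hyK⟩ hxy
    ext1
    have hsub : ∀ v ∈ (Z : Set V), (x - y) v = 0 := by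
      intro v hv
      have := congrFun hxy ⟨v, by simpa using hv⟩
      simpa [LinearMap.funLeft, sub_eq_zero] using this
    have hker : A.mulVec (x - y) = 0 := by
      have hx0 : A.mulVec x = 0 := hxK
      have hy0 : A.mulVec y = 0 := hyK
      rw [Matrix.mulVec_sub, hx0, hy0, sub_zero]
    have hall : ∀ v, (x - y) v = 0 := fun v =>
      zforced_zero G ↑Z A hA (x - y) hker hsub v (hZ v)
    funext v
    have := hall v
    simpa [sub_eq_zero] using this
  have hfin : Module.finrank ℝ K ≤ Module.finrank ℝ ({v // v ∈ Z} → ℝ) :=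
    LinearMap.finrank_le_finrank_of_injective hinj
  have hcard : Module.finrank ℝ ({v // v ∈ Z} → ℝ) = Z.card := by
    simp [Module.finrank_fintype_fun_eq_card]
  have hrn : A.rank + Module.finrank ℝ K = Fintype.card V := by
    have := A.mulVecLin.finrank_range_add_finrank_ker
    rwa [Module.finrank_fintype_fun_eq_card] at this
  have : nullity A = Module.finrank ℝ K := by
    unfold nullity; omega
  omega

lemma zforced_mono {G : SimpleGraph V} {Z Z' : Set V} (h : Z ⊆ Z') {v : V}
    (hv : ZForced G Z v) : ZForced G Z' v := by
  induction hv with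
  | init hv => exact .init (h hv)
  | force hadj hu hall ihu ihall => exact .force hadj ihu (fun w hw hne => ihall w hw hne)

/-- The forcing closure as a Finset. -/

noncomputable def cl [Fintype V] (G : SimpleGraph V) (B : Finset V) : Finset V :=
  haveI := Classical.dec
  univ.filter (fun v => ZForced G ↑B v)

lemma mem_cl [Fintype V] {G : SimpleGraph V} {B : Finset V} {v : V} :
    v ∈ cl G B ↔ ZForced G ↑B v := by
  classical
  simp [cl]

lemma subset_cl [Fintype V] {G : SimpleGraph V} {B : Finset V} : B ⊆ cl G B :=
  fun v hv => mem_cl.mpr (.init (by simpa using hv))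

lemma cl_mono [Fintype V] {G : SimpleGraph V} {B B' : Finset V} (h : B ⊆ B') :
    cl G B ⊆ cl G B' := fun v hv =>
  mem_cl.mpr (zforced_mono (by exact_mod_cast h) (mem_cl.mp hv))

/-- A crossing edge out of a nonfull nonempty set, from connectivity. -/

lemma exists_crossing {G : SimpleGraph V} (hconn : G.Connected) {s : Set V}
    (hne : s.Nonempty) (hne' : sᶜ.Nonempty) :
    ∃ u ∈ s, ∃ v, v ∉ s ∧ G.Adj u v := by
  obtain ⟨a, ha⟩ := hne
  obtain ⟨b, hb⟩ := hne'
  obtain ⟨w⟩ := hconn.preconnected a b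
  clear hconn
  induction w with
  | nil => exact absurd ha hb
  | @cons u c d hadj p ih =>
    by_cases hc : c ∈ s
    · exact ih hc hb
    · exact ⟨u, ha, c, hc, hadj⟩

lemma cl_attached [Fintype V] {G : SimpleGraph V} {B : Finset V}
    (hinv : ∀ v ∈ B, ∃ u ∈ cl G B, G.Adj v u) :
    ∀ v ∈ cl G B, ∃ u ∈ cl G B, G.Adj v u := by
  intro v hv
  have h := mem_cl.mp hv
  induction h with
  | init hv' => exact hinv _ (by simpa using hv')
  | @force u v hadj hu hall ihu ihall => exact ⟨u, mem_cl.mpr hu, hadj.symm⟩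

lemma extend [Fintype V] [DecidableEq V] (G : SimpleGraph V) [DecidableRel G.Adj]
    (hconn : G.Connected) (hcubic : ∀ v : V, G.degree v = 3) :
    ∀ k (B : Finset V), B.Nonempty → (∀ v ∈ B, ∃ u ∈ cl G B, G.Adj v u) →
      Fintype.card V - (cl G B).card ≤ k →
      ∃ B' : Finset V, IsZeroForcingSet G ↑B' ∧
        2 * B'.card ≤ 2 * B.card + (Fintype.card V - (cl G B).card) := by
  classical
  intro k
  induction k using Nat.strong_induction_on with
  | _ k ih =>
    intro B hBne hinv hk
    by_cases hfull : cl G B = univ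
    · exact ⟨B, fun v => mem_cl.mp (hfull ▸ mem_univ v), Nat.le_add_right _ _⟩
    · have hclne : ((cl G B : Set V)).Nonempty := ⟨hBne.choose, subset_cl hBne.choose_spec⟩
      have hcompl : ((cl G B : Set V))ᶜ.Nonempty := by
        by_contra h
        rw [Set.not_nonempty_iff_eq_empty, Set.compl_empty_iff] at h
        exact hfull (by ext v; simpa using Set.eq_univ_iff_forall.mp h v)
      obtain ⟨u, hu, v, hv, huv⟩ := exists_crossing hconn hclne hcompl
      have hu' : u ∈ cl G B := hu
      have hv' : v ∉ cl G B := fun h => hv h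
      -- u has a black neighbor
      obtain ⟨b, hb, hub⟩ := cl_attached hinv u hu'
      -- white neighbors of u
      set W : Finset V := (G.neighborFinset u).filter (fun z => z ∉ cl G B) with hW
      have hvW : v ∈ W := by
        simp only [hW, mem_filter, SimpleGraph.mem_neighborFinset]
        exact ⟨huv, hv'⟩
      have hbW : b ∉ W := by
        simp only [hW, mem_filter]
        tauto
      have hWcard2 : W.card ≤ 2 := by
        have hsub : W ⊆ (G.neighborFinset u).erase b := by
          intro z hz
          rcases mem_filter.mp hz with ⟨hz1, hz2⟩
          exact Finset.mem_erase.mpr ⟨fun h => hbW (h ▸ hz), hz1⟩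
        calc W.card ≤ ((G.neighborFinset u).erase b).card := Finset.card_le_card hsub
          _ = (G.neighborFinset u).card - 1 :=
              Finset.card_erase_of_mem ((SimpleGraph.mem_neighborFinset _ _ _).mpr hub)
          _ = 2 := by rw [G.card_neighborFinset_eq_degree, hcubic u]
      have hWne1 : W.card ≠ 1 := by
        intro h1
        obtain ⟨w, hw⟩ := Finset.card_eq_one.mp h1
        have hvw : v = w := by have := hvW; rw [hw, mem_singleton] at this; exact this
        apply hv'
        refine mem_cl.mpr (.force huv (mem_cl.mp hu') ?_)
        intro z hz hne
        have hzW : z ∉ W := by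
          rw [hw, mem_singleton]; exact fun h => hne (h ▸ hvw.symm)
        have : z ∈ cl G B := by
          by_contra hzc
          exact hzW (mem_filter.mpr ⟨(SimpleGraph.mem_neighborFinset _ _ _).mpr hz, hzc⟩)
        exact mem_cl.mp this
      have hWcard : W.card = 2 := by
        have h1 : 1 ≤ W.card := Finset.card_pos.mpr ⟨v, hvW⟩
        omega
      obtain ⟨w, x, hwx, hWeq⟩ := Finset.card_eq_two.mp hWcard
      have hwW : w ∈ W := by rw [hWeq]; simp
      have hxW : x ∈ W := by rw [hWeq]; simp
      have hwcl : w ∉ cl G B := (mem_filter.mp hwW).2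
      have hxcl : x ∉ cl G B := (mem_filter.mp hxW).2
      have hadjw : G.Adj u w := (SimpleGraph.mem_neighborFinset _ _ _).mp (mem_filter.mp hwW).1
      have hadjx : G.Adj u x := (SimpleGraph.mem_neighborFinset _ _ _).mp (mem_filter.mp hxW).1
      set B' : Finset V := insert w B with hB'
      have hBB' : B ⊆ B' := Finset.subset_insert _ _
      have hxf : ZForced G ↑B' x := by
        refine .force hadjx (zforced_mono (by exact_mod_cast hBB') (mem_cl.mp hu')) ?_
        intro z hz hne
        by_cases hzw : z = w
        · exact .init (by simp [hB', hzw])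
        · have hzW : z ∉ W := by
            rw [hWeq]; simp only [mem_insert, mem_singleton]; tauto
          have : z ∈ cl G B := by
            by_contra hzc
            exact hzW (mem_filter.mpr ⟨(SimpleGraph.mem_neighborFinset _ _ _).mpr hz, hzc⟩)
          exact zforced_mono (by exact_mod_cast hBB') (mem_cl.mp this)
      have hsub2 : insert w (insert x (cl G B)) ⊆ cl G B' := by
        intro z hz
        rcases mem_insert.mp hz with rfl | hz
        · exact mem_cl.mpr (.init (by simp [hB']))
        · rcases mem_insert.mp hz with rfl | hz
          · exact mem_cl.mpr hxf
          · exact cl_mono hBB' hz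
      have hgain : (cl G B).card + 2 ≤ (cl G B').card := by
        have : (insert w (insert x (cl G B))).card = (cl G B).card + 2 := by
          rw [Finset.card_insert_of_notMem, Finset.card_insert_of_notMem hxcl]
          simp only [mem_insert]
          tauto
        calc (cl G B).card + 2 = _ := this.symm
          _ ≤ (cl G B').card := Finset.card_le_card hsub2
      have hlt : (cl G B).card < Fintype.card V := by
        have : (cl G B).card ≤ Fintype.card V := Finset.card_le_univ _
        rcases this.lt_or_eq with h | h
        · exact h
        · exact absurd (Finset.eq_univ_of_card _ h) hfull
      have hle : (cl G B').card ≤ Fintype.card V := Finset.card_le_univ _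
      have hinv' : ∀ z ∈ B', ∃ y ∈ cl G B', G.Adj z y := by
        intro z hz
        rcases mem_insert.mp hz with rfl | hz
        · exact ⟨u, cl_mono hBB' hu', hadjw.symm⟩
        · obtain ⟨y, hy, hzy⟩ := hinv z hz
          exact ⟨y, cl_mono hBB' hy, hzy⟩
      obtain ⟨B'', hB''f, hB''c⟩ :=
        ih (Fintype.card V - (cl G B').card) (by omega) B' ⟨w, mem_insert_self _ _⟩ hinv' le_rfl
      refine ⟨B'', hB''f, ?_⟩
      have hcard' : B'.card ≤ B.card + 1 := Finset.card_insert_le _ _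
      omega

/-- For a connected cubic graph `G` on `n` vertices,
`M(G) ≤ Z(G) ≤ n/2 + 1`. -/
theorem maxNullity_le_zeroForcingNumber_le {V : Type*} [Fintype V] [DecidableEq V]
    (G : SimpleGraph V) [DecidableRel G.Adj] (hconn : G.Connected)
    (hcubic : ∀ v : V, G.degree v = 3) :
    maxNullity G ≤ zeroForcingNumber G ∧
      (zeroForcingNumber G : ℝ) ≤ (Fintype.card V : ℝ) / 2 + 1 := by
  classical
  have hVne : Nonempty V := hconn.nonempty
  set n := Fintype.card V with hn
  -- Part 2: construct a small zero forcing set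
  obtain ⟨v₀⟩ := hVne
  have hdeg : (G.neighborFinset v₀).card = 3 := by
    rw [G.card_neighborFinset_eq_degree]; exact hcubic v₀
  obtain ⟨w₁, w₂, w₃, h12, h13, h23, hNeq⟩ := Finset.card_eq_three.mp hdeg
  have hadj1 : G.Adj v₀ w₁ := by
    have : w₁ ∈ G.neighborFinset v₀ := by rw [hNeq]; simp
    exact (SimpleGraph.mem_neighborFinset _ _ _).mp this
  have hadj2 : G.Adj v₀ w₂ := by
    have : w₂ ∈ G.neighborFinset v₀ := by rw [hNeq]; simp
    exact (SimpleGraph.mem_neighborFinset _ _ _).mp this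
  have hadj3 : G.Adj v₀ w₃ := by
    have : w₃ ∈ G.neighborFinset v₀ := by rw [hNeq]; simp
    exact (SimpleGraph.mem_neighborFinset _ _ _).mp this
  set B₀ : Finset V := {v₀, w₁, w₂} with hB₀
  have hmemB₀ : ∀ z, z ∈ B₀ ↔ z = v₀ ∨ z = w₁ ∨ z = w₂ := by
    intro z; simp [hB₀]
  have hinv : ∀ z ∈ B₀, ∃ y ∈ cl G B₀, G.Adj z y := by
    intro z hz
    rcases (hmemB₀ z).mp hz with rfl | rfl | rfl
    · exact ⟨w₁, subset_cl ((hmemB₀ w₁).mpr (Or.inr (Or.inl rfl))), hadj1⟩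
    · exact ⟨v₀, subset_cl ((hmemB₀ v₀).mpr (Or.inl rfl)), hadj1.symm⟩
    · exact ⟨v₀, subset_cl ((hmemB₀ v₀).mpr (Or.inl rfl)), hadj2.symm⟩
  have hw₃ : ZForced G ↑B₀ w₃ := by
    refine .force hadj3 (.init (by simp [hB₀])) ?_
    intro z hz hne
    have hzN : z ∈ G.neighborFinset v₀ := (SimpleGraph.mem_neighborFinset _ _ _).mpr hz
    rw [hNeq] at hzN
    simp only [Finset.mem_insert, Finset.mem_singleton] at hzN
    rcases hzN with rfl | rfl | rfl
    · exact .init (by simp [hB₀])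
    · exact .init (by simp [hB₀])
    · exact absurd rfl hne
  have hS : ({v₀, w₁, w₂, w₃} : Finset V) ⊆ cl G B₀ := by
    intro z hz
    simp only [Finset.mem_insert, Finset.mem_singleton] at hz
    rcases hz with rfl | rfl | rfl | rfl
    · exact subset_cl ((hmemB₀ z).mpr (Or.inl rfl))
    · exact subset_cl ((hmemB₀ z).mpr (Or.inr (Or.inl rfl)))
    · exact subset_cl ((hmemB₀ z).mpr (Or.inr (Or.inr rfl)))
    · exact mem_cl.mpr hw₃
  have hv₀w : v₀ ≠ w₁ ∧ v₀ ≠ w₂ ∧ v₀ ≠ w₃ :=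
    ⟨fun h => G.irrefl (h ▸ hadj1), fun h => G.irrefl (h ▸ hadj2), fun h => G.irrefl (h ▸ hadj3)⟩
  have hScard : ({v₀, w₁, w₂, w₃} : Finset V).card = 4 := by
    rw [Finset.card_insert_of_notMem (by simp only [Finset.mem_insert, Finset.mem_singleton]; tauto),
        Finset.card_insert_of_notMem (by simp only [Finset.mem_insert, Finset.mem_singleton]; tauto),
        Finset.card_insert_of_notMem (by simp only [Finset.mem_singleton]; tauto),
        Finset.card_singleton]
  have hcl4 : 4 ≤ (cl G B₀).card := hScard ▸ Finset.card_le_card hS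
  have hcln : (cl G B₀).card ≤ n := Finset.card_le_univ _
  have hB₀card : B₀.card ≤ 3 := by
    apply le_trans (Finset.card_insert_le _ _)
    have := Finset.card_insert_le w₁ ({w₂} : Finset V)
    simp only [Finset.card_singleton] at this
    omega
  obtain ⟨B', hB'f, hB'c⟩ := extend G hconn hcubic (n - (cl G B₀).card) B₀
    ⟨v₀, (hmemB₀ v₀).mpr (Or.inl rfl)⟩ hinv le_rfl
  have hzfn_le : zeroForcingNumber G ≤ B'.card :=
    Nat.sInf_le ⟨B', rfl, hB'f⟩
  have h2 : 2 * zeroForcingNumber G ≤ n + 2 := by omega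
  -- Part 1: max nullity is at most the zero forcing number
  have hZne : {k : ℕ | ∃ Z : Finset V, Z.card = k ∧ IsZeroForcingSet G ↑Z}.Nonempty :=
    ⟨(univ : Finset V).card, univ, rfl, fun v => .init (by simp)⟩
  obtain ⟨Z, hZcard, hZf⟩ := Nat.sInf_mem hZne
  have hM : maxNullity G ≤ zeroForcingNumber G := by
    rw [maxNullity]
    by_cases hSne : {k : ℕ | ∃ A : Matrix V V ℝ, IsGraphMatrix G A ∧ nullity A = k}.Nonempty
    · refine csSup_le hSne ?_
      rintro k ⟨A, hA, rfl⟩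
      calc nullity A ≤ Z.card := nullity_le_card G A hA Z hZf
        _ = zeroForcingNumber G := hZcard
    · rw [Set.not_nonempty_iff_eq_empty.mp hSne, csSup_empty]
      exact Nat.zero_le _
  refine ⟨hM, ?_⟩
  have : (2 * zeroForcingNumber G : ℝ) ≤ (n : ℝ) + 2 := by exact_mod_cast h2
  rw [hn] at this ⊢
  linarith
end
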